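/- Up to isomorphism, there is exactly one indecomposable cycle set of cardinality p^2 with multipermutational level 2 and permutation group isomorphic to Z/pZ × Z/pZ, namely Z/pZ × Z/pZ with (a,i)·(b,j) = (b+1, j+a). -/

import Mathlib

/-- A cycle set: a set with bijective left multiplications `σ x`
satisfying `(x·y)·(x·z) = (y·x)·(y·z)`. -/
structure CycleSet (X : Type*) where
  σ : X → Equiv.Perm X
  cycl : ∀ x y z : X, σ (σ x y) (σ x z) = σ (σ y x) (σ y z)

namespace CycleSet

variable {X Y : Type*}

/-- The permutation group generated by the left multiplications. -/
def permGroup (S : CycleSet X) : Subgroup (Equiv.Perm X) :=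
  Subgroup.closure (Set.range S.σ)

/-- Indecomposability: the permutation group acts transitively. -/
def Transitive (S : CycleSet X) : Prop :=
  ∀ x y : X, ∃ g ∈ S.permGroup, g x = y

/-- The permutation group is abelian. -/
def AbelianPerm (S : CycleSet X) : Prop :=
  ∀ g ∈ S.permGroup, ∀ h ∈ S.permGroup, g * h = h * g

/-- `rel S n x y` holds iff `x` and `y` become equal in the `n`-th iterated
retraction `σ^n(X)`. -/
def rel (S : CycleSet X) : ℕ → X → X → Prop
  | 0 => Eq
  | n + 1 => fun x y => ∀ z, S.rel n (S.σ x z) (S.σ y z)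

/-- The cardinality `|σ^n(X)|` of the `n`-th iterated retraction. -/
noncomputable def retCard (S : CycleSet X) (n : ℕ) : ℕ :=
  Nat.card (Quot (S.rel n))

/-- `X` is multipermutational of level `m`: `m` is minimal with `|σ^m(X)| = 1`. -/
def MultipermLevel (S : CycleSet X) (m : ℕ) : Prop :=
  (∀ x y, S.rel m x y) ∧ ∀ k < m, ¬ (∀ x y, S.rel k x y)

/-- Isomorphism of cycle sets. -/
def Isomorphic (S : CycleSet X) (T : CycleSet Y) : Prop :=
  ∃ F : X → Y, Function.Bijective F ∧ ∀ x y, F (S.σ x y) = T.σ (F x) (F y)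

end CycleSet


/-!
Level 2 says that `σ_{x·y}` does not depend on `x`; since the permutation group `G` is abelian,
the cycle law `σ_{x·y} σ_x = σ_{y·x} σ_y` then shows that `c = σ_{x·y} σ_y⁻¹` is one fixed element
of `G`, so `σ_{x·y} = c σ_y`. Consequently `σ_{s^a c^i e} = c^a s` for a base point `e` and
`s = σ_e`. Level exactly 2 and transitivity force `c ≠ 1`, so `c` has order `p`, and since an
abelian transitive group acts freely, `(a, i) ↦ s^a c^i e` is injective, hence a bijection
`ZMod p × ZMod p → X`; the formula for `σ` turns it into an isomorphism from the model.
-/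

def Equiv.Perm.translationHom (A : Type*) [AddCommGroup A] : Multiplicative A →* Equiv.Perm A where
  toFun v := Equiv.addRight v.toAdd
  map_one' := Equiv.addRight_zero
  map_mul' v w := by rw [toAdd_mul, add_comm, Equiv.addRight_add]

lemma Equiv.Perm.translationHom_injective (A : Type*) [AddCommGroup A] :
    Function.Injective (Equiv.Perm.translationHom A) := fun v w h =>
  Multiplicative.toAdd.injective (by simpa [translationHom] using congrArg (· 0) h)

lemma pow_zmod_val_add {G : Type*} [Monoid G] {n : ℕ} [NeZero n] {g : G} (hg : g ^ n = 1)
    (a b : ZMod n) : g ^ (a + b).val = g ^ (a.val + b.val) := by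
  rw [ZMod.val_add, ← pow_eq_pow_mod _ hg]

lemma pow_zmod_val_injective {G : Type*} [LeftCancelMonoid G] {n : ℕ} [NeZero n] {g : G}
    (hg : orderOf g = n) : Function.Injective fun a : ZMod n => g ^ a.val := fun a b h => by
  have h' := pow_inj_mod.1 (show g ^ a.val = g ^ b.val from h)
  rwa [hg, Nat.mod_eq_of_lt (ZMod.val_lt a), Nat.mod_eq_of_lt (ZMod.val_lt b),
    (ZMod.val_injective n).eq_iff] at h'

lemma closure_ofAdd_one_prod_eq_top (n : ℕ) :
    Subgroup.closure (Set.range fun a : ZMod n => Multiplicative.ofAdd ((1 : ZMod n), a)) = ⊤ := by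
  set H := Subgroup.closure (Set.range fun a : ZMod n => Multiplicative.ofAdd ((1 : ZMod n), a))
  have h1 (a : ZMod n) : Multiplicative.ofAdd ((1 : ZMod n), a) ∈ H :=
    Subgroup.subset_closure ⟨a, rfl⟩
  have h2 (a : ZMod n) : Multiplicative.ofAdd ((0 : ZMod n), a) ∈ H := by
    simpa [← ofAdd_sub] using div_mem (h1 a) (h1 0)
  have h3 (k : ℤ) : Multiplicative.ofAdd ((k : ZMod n), (0 : ZMod n)) ∈ H := by
    simpa [← ofAdd_sub, ← ofAdd_zsmul] using zpow_mem (div_mem (h1 0) (h2 0)) k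
  refine eq_top_iff.2 fun v _ => ?_
  obtain ⟨⟨a, b⟩, rfl⟩ := Multiplicative.ofAdd.surjective v
  obtain ⟨k, rfl⟩ := ZMod.intCast_surjective a
  simpa [← ofAdd_add] using mul_mem (h3 k) (h2 b)

namespace CycleSet

variable {X Y : Type*}

def translation (R : Type*) [AddCommGroupWithOne R] : CycleSet (R × R) where
  σ x := Equiv.addRight (1, x.1)
  cycl x y z := by
    ext
    · rfl
    · simp only [Equiv.coe_addRight, Prod.snd_add, Prod.fst_add]
      abel

lemma translation_σ_apply {R : Type*} [AddCommGroupWithOne R] (a i b j : R) :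
    (translation R).σ (a, i) (b, j) = (b + 1, j + a) := rfl

lemma translation_permGroup (n : ℕ) :
    (translation (ZMod n)).permGroup = (Equiv.Perm.translationHom (ZMod n × ZMod n)).range := by
  rw [permGroup, MonoidHom.range_eq_map, ← closure_ofAdd_one_prod_eq_top, MonoidHom.map_closure,
    ← Set.range_comp]
  exact congrArg _ ((Prod.fst_surjective (β := ZMod n)).range_comp
    (Equiv.Perm.translationHom _ ∘ fun a => Multiplicative.ofAdd (1, a)))

lemma translation_transitive (n : ℕ) : (translation (ZMod n)).Transitive := fun x y =>
  ⟨Equiv.Perm.translationHom _ (Multiplicative.ofAdd (y - x)),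
    translation_permGroup n ▸ MonoidHom.mem_range.2 ⟨_, rfl⟩, by simp [Equiv.Perm.translationHom]⟩

noncomputable def translationPermGroupEquiv (n : ℕ) :
    (translation (ZMod n)).permGroup ≃* Multiplicative (ZMod n × ZMod n) :=
  (MulEquiv.subgroupCongr (translation_permGroup n)).trans
    (MonoidHom.ofInjective (Equiv.Perm.translationHom_injective _)).symm

lemma translation_multipermLevel_two (R : Type*) [AddCommGroupWithOne R] [NeZero (1 : R)] :
    (translation R).MultipermLevel 2 := by
  refine ⟨fun x y z w => by simp [translation, rel], fun k hk hall => ?_⟩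
  interval_cases k
  · simpa [rel] using hall (0, 0) (1, 0)
  · simpa [rel, translation] using hall (0, 0) (1, 0) (0, 0)

variable (S : CycleSet X)

lemma σ_mem_permGroup (x : X) : S.σ x ∈ S.permGroup := Subgroup.subset_closure ⟨x, rfl⟩

lemma σ_σ_mul_σ (x y : X) : S.σ (S.σ x y) * S.σ x = S.σ (S.σ y x) * S.σ y :=
  Equiv.ext (S.cycl x y)

lemma rel_one_iff {x y : X} : S.rel 1 x y ↔ S.σ x = S.σ y := Equiv.ext_iff.symm

lemma rel_two_iff {x y : X} : S.rel 2 x y ↔ ∀ z, S.σ (S.σ x z) = S.σ (S.σ y z) :=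
  forall_congr' fun _ => S.rel_one_iff

lemma abelianPerm_of_mulEquiv {H : Type*} [CommGroup H] (φ : S.permGroup ≃* H) :
    S.AbelianPerm := fun g hg h hh =>
  congrArg Subtype.val (φ.injective (by rw [map_mul, map_mul, mul_comm]) :
    (⟨g, hg⟩ * ⟨h, hh⟩ : S.permGroup) = ⟨h, hh⟩ * ⟨g, hg⟩)

lemma pow_eq_one_of_mulEquiv {n : ℕ} (φ : S.permGroup ≃* Multiplicative (ZMod n × ZMod n))
    {g : Equiv.Perm X} (hg : g ∈ S.permGroup) : g ^ n = 1 := by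
  have hx (x : Multiplicative (ZMod n × ZMod n)) : x ^ n = 1 := by
    rw [← ofAdd_toAdd x, ← ofAdd_nsmul, ZModModule.char_nsmul_eq_zero, ofAdd_zero]
  exact congrArg Subtype.val (φ.injective (by rw [map_pow, hx, map_one]) :
    (⟨g, hg⟩ : S.permGroup) ^ n = 1)

variable {S}

lemma Isomorphic.symm {T : CycleSet Y} (h : S.Isomorphic T) : T.Isomorphic S := by
  obtain ⟨F, hF, hmul⟩ := h
  let E := Equiv.ofBijective F hF
  refine ⟨E.symm, E.symm.bijective, fun x y => E.injective ?_⟩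
  have hx : F (E.symm x) = x := E.apply_symm_apply x
  have hy : F (E.symm y) = y := E.apply_symm_apply y
  rw [E.apply_symm_apply]
  change _ = F _
  rw [hmul, hx, hy]

lemma eq_of_apply_eq_of_mem_permGroup (hab : S.AbelianPerm) (htr : S.Transitive) {g h : Equiv.Perm X}
    (hg : g ∈ S.permGroup) (hh : h ∈ S.permGroup) {x : X} (hx : g x = h x) : g = h := by
  ext y
  obtain ⟨k, hk, rfl⟩ := htr x y
  rw [← Equiv.Perm.mul_apply, hab g hg k hk, Equiv.Perm.mul_apply, hx, ← Equiv.Perm.mul_apply,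
    hab k hk h hh, Equiv.Perm.mul_apply]

variable (S) in
def shift (e : X) : Equiv.Perm X := S.σ (S.σ e e) * (S.σ e)⁻¹

lemma shift_mem_permGroup (e : X) : S.shift e ∈ S.permGroup :=
  mul_mem (S.σ_mem_permGroup _) (inv_mem (S.σ_mem_permGroup e))

lemma σ_σ_eq_shift_mul (hab : S.AbelianPerm) (h2 : ∀ x y, S.rel 2 x y) (e x y : X) :
    S.σ (S.σ x y) = S.shift e * S.σ y := by
  have hcycl := S.σ_σ_mul_σ y e
  rw [S.rel_two_iff.1 (h2 y e) e] at hcycl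
  rw [S.rel_two_iff.1 (h2 x e) y, shift, mul_assoc,
    hab _ (inv_mem (S.σ_mem_permGroup e)) _ (S.σ_mem_permGroup y), ← mul_assoc, hcycl,
    mul_inv_cancel_right]

lemma σ_inv_apply (hab : S.AbelianPerm) (h2 : ∀ x y, S.rel 2 x y) (e x y : X) :
    S.σ ((S.σ x)⁻¹ y) = (S.shift e)⁻¹ * S.σ y := by
  rw [eq_inv_mul_iff_mul_eq, ← σ_σ_eq_shift_mul hab h2 e x]
  exact congrArg S.σ ((S.σ x).apply_symm_apply y)

lemma σ_shift_apply (hab : S.AbelianPerm) (h2 : ∀ x y, S.rel 2 x y) (e z : X) :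
    S.σ (S.shift e z) = S.σ z := by
  rw [shift, Equiv.Perm.mul_apply, σ_σ_eq_shift_mul hab h2 e, σ_inv_apply hab h2 e,
    mul_inv_cancel_left]

lemma σ_shift_pow_apply (hab : S.AbelianPerm) (h2 : ∀ x y, S.rel 2 x y) (n : ℕ) (e z : X) :
    S.σ ((S.shift e ^ n) z) = S.σ z := by
  induction n with
  | zero => rfl
  | succ n ih => rw [pow_succ', Equiv.Perm.mul_apply, σ_shift_apply hab h2, ih]

lemma σ_σ_pow_apply (hab : S.AbelianPerm) (h2 : ∀ x y, S.rel 2 x y) (n : ℕ) (e x z : X) :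
    S.σ ((S.σ x ^ n) z) = S.shift e ^ n * S.σ z := by
  induction n with
  | zero => simp
  | succ n ih =>
    rw [pow_succ', Equiv.Perm.mul_apply, σ_σ_eq_shift_mul hab h2 e, ih, pow_succ', mul_assoc]

lemma shift_ne_one (hab : S.AbelianPerm) (htr : S.Transitive) (hlev : S.MultipermLevel 2)
    (e : X) : S.shift e ≠ 1 := by
  intro hc
  have hσ : ∀ g ∈ S.permGroup, ∀ z, S.σ (g z) = S.σ z := by
    intro g hg
    induction hg using Subgroup.closure_induction with
    | mem f hf =>
      obtain ⟨x, rfl⟩ := hf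
      intro z
      rw [σ_σ_eq_shift_mul hab hlev.1 e, hc, one_mul]
    | one => exact fun z => rfl
    | mul g h _ _ ihg ihh => exact fun z => (ihg (h z)).trans (ihh z)
    | inv g _ ihg =>
      exact fun z => (ihg (g⁻¹ z)).symm.trans (congrArg S.σ (g.apply_symm_apply z))
  refine hlev.2 1 one_lt_two fun x y => S.rel_one_iff.2 ?_
  obtain ⟨g, hg, rfl⟩ := htr x y
  exact (hσ g hg x).symm

variable (S) in
def coordMap (n : ℕ) (e : X) (v : ZMod n × ZMod n) : X :=
  (S.σ e ^ v.1.val * S.shift e ^ v.2.val) e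

lemma σ_coordMap (hab : S.AbelianPerm) (h2 : ∀ x y, S.rel 2 x y) (n : ℕ) (e : X)
    (a i : ZMod n) : S.σ (S.coordMap n e (a, i)) = S.shift e ^ a.val * S.σ e := by
  rw [coordMap, Equiv.Perm.mul_apply, σ_σ_pow_apply hab h2, σ_shift_pow_apply hab h2]

lemma coordMap_injective {p : ℕ} [Fact p.Prime] (hab : S.AbelianPerm) (htr : S.Transitive)
    (hlev : S.MultipermLevel 2) (hexp : ∀ g ∈ S.permGroup, g ^ p = 1) (e : X) :
    Function.Injective (S.coordMap p e) := by
  have hc : orderOf (S.shift e) = p :=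
    orderOf_eq_prime (hexp _ (shift_mem_permGroup e)) (shift_ne_one hab htr hlev e)
  have hmem (v : ZMod p × ZMod p) : S.σ e ^ v.1.val * S.shift e ^ v.2.val ∈ S.permGroup :=
    mul_mem (pow_mem (S.σ_mem_permGroup e) _) (pow_mem (shift_mem_permGroup e) _)
  rintro ⟨a, i⟩ ⟨b, j⟩ h
  obtain rfl : a = b := pow_zmod_val_injective hc <| mul_right_cancel (b := S.σ e) <| by
    rw [← σ_coordMap hab hlev.1, ← σ_coordMap hab hlev.1, h]
  have hij := mul_left_cancel (eq_of_apply_eq_of_mem_permGroup hab htr (hmem (a, i)) (hmem (a, j)) h)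
  exact congrArg _ (pow_zmod_val_injective hc hij)

lemma coordMap_translation_σ {p : ℕ} [Fact (1 < p)] (hab : S.AbelianPerm)
    (h2 : ∀ x y, S.rel 2 x y) (hexp : ∀ g ∈ S.permGroup, g ^ p = 1) (e : X)
    (v w : ZMod p × ZMod p) :
    S.coordMap p e ((translation (ZMod p)).σ v w) =
      S.σ (S.coordMap p e v) (S.coordMap p e w) := by
  obtain ⟨a, i⟩ := v
  obtain ⟨b, j⟩ := w
  set s := S.σ e
  set c := S.shift e
  have hcs : Commute c s := hab _ (shift_mem_permGroup e) _ (S.σ_mem_permGroup e)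
  have key : c ^ a.val * s * (s ^ b.val * c ^ j.val) = s ^ (b.val + 1) * c ^ (j.val + a.val) :=
    calc c ^ a.val * s * (s ^ b.val * c ^ j.val)
        _ = c ^ a.val * (s ^ (b.val + 1) * c ^ j.val) := by
          rw [mul_assoc, ← mul_assoc s, ← pow_succ']
        _ = s ^ (b.val + 1) * (c ^ a.val * c ^ j.val) := by
          rw [← mul_assoc, ← mul_assoc, (hcs.pow_pow _ _).eq]
        _ = s ^ (b.val + 1) * c ^ (j.val + a.val) := by rw [← pow_add, add_comm a.val]
  rw [translation_σ_apply, σ_coordMap hab h2, coordMap, coordMap, ← Equiv.Perm.mul_apply, key,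
    pow_zmod_val_add (hexp _ (S.σ_mem_permGroup e)),
    pow_zmod_val_add (hexp _ (shift_mem_permGroup e)), ZMod.val_one]

theorem translation_isomorphic {p : ℕ} [Fact p.Prime] (hcard : Nat.card X = p ^ 2)
    (htr : S.Transitive) (hlev : S.MultipermLevel 2)
    (φ : S.permGroup ≃* Multiplicative (ZMod p × ZMod p)) :
    (translation (ZMod p)).Isomorphic S := by
  have hp : p.Prime := Fact.out
  have : Fact (1 < p) := ⟨hp.one_lt⟩
  have hab := S.abelianPerm_of_mulEquiv φ
  have hexp : ∀ g ∈ S.permGroup, g ^ p = 1 := fun _ => S.pow_eq_one_of_mulEquiv φ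
  obtain ⟨⟨e⟩, _⟩ := Nat.card_pos_iff.1 (hcard ▸ pow_pos hp.pos 2)
  refine ⟨S.coordMap p e, (coordMap_injective hab htr hlev hexp e).bijective_of_nat_card_le ?_,
    coordMap_translation_σ hab hlev.1 hexp e⟩
  rw [hcard, Nat.card_prod, Nat.card_zmod, sq]

end CycleSet

/-- Up to isomorphism there is exactly one indecomposable cycle set of
cardinality `p^2`, multipermutational level 2, with permutation group
isomorphic to `Z/pZ × Z/pZ`: namely `(a,i)·(b,j) = (b+1, j+a)`. -/
theorem stmt16 (p : ℕ) (hp : p.Prime) :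
    (∃ T : CycleSet (ZMod p × ZMod p),
      (∀ a i b j : ZMod p, T.σ (a, i) (b, j) = (b + 1, j + a)) ∧
        T.Transitive ∧ T.MultipermLevel 2 ∧
        Nonempty (T.permGroup ≃* Multiplicative (ZMod p × ZMod p))) ∧
    ∀ (X : Type) (S : CycleSet X), Nat.card X = p ^ 2 → S.Transitive →
      S.MultipermLevel 2 →
      Nonempty (S.permGroup ≃* Multiplicative (ZMod p × ZMod p)) →
      ∃ T : CycleSet (ZMod p × ZMod p),
        (∀ a i b j : ZMod p, T.σ (a, i) (b, j) = (b + 1, j + a)) ∧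
          S.Isomorphic T := by
  have : Fact p.Prime := ⟨hp⟩
  have : Fact (1 < p) := ⟨hp.one_lt⟩
  refine ⟨⟨CycleSet.translation (ZMod p), CycleSet.translation_σ_apply,
    CycleSet.translation_transitive p, CycleSet.translation_multipermLevel_two _,
    ⟨CycleSet.translationPermGroupEquiv p⟩⟩, ?_⟩
  rintro X S hcard htr hlev ⟨φ⟩
  exact ⟨CycleSet.translation (ZMod p), CycleSet.translation_σ_apply,
    (CycleSet.translation_isomorphic hcard htr hlev φ).symm⟩
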